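/- For a metric space (B,d) and f : B → ℝ, the following are equivalent: (i) f is a pointwise limit of continuous functions; (ii) for every gauge φ there exists a sequence of continuous functions f_n : B → ℝ such that for all b ∈ B, f_n(b') → f(b) uniformly over b' with d(b,b') ≤ φ(1/n) (i.e., sup_{d(b,b') ≤ φ(1/n)} |f_n(b') − f(b)| → 0 for each fixed b). -/

import Mathlib

/-!
A pointwise limit of continuous functions `g n → f` is also a pointwise limit of Lipschitz
functions. For each precision `2⁻ᵐ` the closed sets `{x | ∀ a ≥ N, |g a x - q| ≤ 2⁻ᵐ}`,
`(N, q) ∈ ℕ × ℚ`, cover `B`, and Lipschitz bumps around them select, for large `k`, a value `q`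
within `2⁻ᵐ` of `f x`; a telescoping sum over the precisions, with clipped increments, merges
these into a single sequence `F k`. Running through `F k` slowly enough that
`Lip(F k) · φ(1/n) → 0` gives the gauge convergence, because
`|F k b' - f b| ≤ |F k b - f b| + Lip(F k) · dist b b'`. Conversely, the gauge `φ = 0` recovers
pointwise convergence.
-/

open Filter Topology Set Metric
open scoped NNReal

theorem LipschitzWith.finset_sum {α ι E : Type*} [PseudoEMetricSpace α] [SeminormedAddCommGroup E]
    (s : Finset ι) {f : ι → α → E} {K : ι → ℝ≥0} (hf : ∀ i ∈ s, LipschitzWith (K i) (f i)) :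
    LipschitzWith (∑ i ∈ s, K i) fun x => ∑ i ∈ s, f i x := by
  classical
  induction s using Finset.induction_on with
  | empty => simpa using LipschitzWith.const (0 : E)
  | insert i s hi ih =>
    simp only [Finset.sum_insert hi]
    exact (hf i (Finset.mem_insert_self i s)).add
      (ih fun j hj => hf j (Finset.mem_insert_of_mem hj))

section Bump

variable {B : Type*} [PseudoMetricSpace B]

open scoped Classical in
/-- The `if` is needed because `infDist x ∅ = 0`. -/
noncomputable def closedBump (E : Set B) (k : ℕ) (x : B) : ℝ :=
  if E.Nonempty then max 0 (1 - (k + 1) * infDist x E) else 0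

variable {E : Set B} {k : ℕ} {x : B}

theorem closedBump_nonneg : 0 ≤ closedBump E k x := by
  unfold closedBump; split_ifs <;> simp

theorem closedBump_le_one : closedBump E k x ≤ 1 := by
  unfold closedBump
  split_ifs
  · exact max_le zero_le_one (by nlinarith [infDist_nonneg (x := x) (s := E)])
  · exact zero_le_one

theorem closedBump_eq_one_of_mem (hx : x ∈ E) : closedBump E k x = 1 := by
  simp [closedBump, show E.Nonempty from ⟨x, hx⟩, infDist_zero_of_mem hx]

theorem lipschitzWith_closedBump (E : Set B) (k : ℕ) : LipschitzWith (k + 1) (closedBump E k) := by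
  unfold closedBump
  split_ifs
  · have h : LipschitzWith (0 + ‖(k : ℝ) + 1‖₊ * 1) fun x => max 0 (1 - (k + 1) * infDist x E) :=
      ((LipschitzWith.const 1).sub
        ((lipschitzWith_smul ((k : ℝ) + 1)).comp (lipschitz_infDist_pt E))).const_max 0
    have hK : ‖(k : ℝ) + 1‖₊ = k + 1 := by
      rw [← Nat.cast_add_one, Real.nnnorm_natCast, Nat.cast_add_one]
    rwa [hK, zero_add, mul_one] at h
  · exact LipschitzWith.const' 0

theorem closedBump_eventually_eq_zero (hE : IsClosed E) (hx : x ∉ E) :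
    ∀ᶠ k in atTop, closedBump E k x = 0 := by
  unfold closedBump
  split_ifs with hne
  · have hd : 0 < infDist x E := (hE.notMem_iff_infDist_pos hne).1 hx
    filter_upwards [tendsto_natCast_atTop_atTop.eventually_ge_atTop (1 / infDist x E)] with k hk
    rw [div_le_iff₀ hd] at hk
    exact max_eq_left (by nlinarith)
  · exact .of_forall fun _ => rfl

end Bump

noncomputable def leadingWeight (θ : ℕ → ℝ) (i : ℕ) : ℝ :=
  max 0 (θ i - ∑ j ∈ Finset.range i, θ j)

theorem leadingWeight_eq_ite {θ : ℕ → ℝ} {i₀ : ℕ} (hθ₀ : ∀ j, 0 ≤ θ j) (hθ₁ : ∀ j, θ j ≤ 1)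
    (hi₀ : θ i₀ = 1) (hlt : ∀ j < i₀, θ j = 0) (i : ℕ) :
    leadingWeight θ i = if i = i₀ then 1 else 0 := by
  unfold leadingWeight
  rcases lt_trichotomy i i₀ with h | rfl | h
  · rw [if_neg h.ne, hlt i h]
    exact max_eq_left (by linarith [Finset.sum_nonneg fun j (_ : j ∈ Finset.range i) => hθ₀ j])
  · rw [if_pos rfl, hi₀, Finset.sum_eq_zero fun j hj => hlt j (Finset.mem_range.1 hj)]
    norm_num
  · rw [if_neg h.ne']
    have : θ i₀ ≤ ∑ j ∈ Finset.range i, θ j :=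
      Finset.single_le_sum (fun j _ => hθ₀ j) (Finset.mem_range.2 h)
    exact max_eq_left (by linarith [hθ₁ i])

theorem LipschitzWith.leadingWeight {α : Type*} [PseudoEMetricSpace α] {θ : ℕ → α → ℝ}
    {K : ℕ → ℝ≥0} (hθ : ∀ j, LipschitzWith (K j) (θ j)) (i : ℕ) :
    LipschitzWith (K i + ∑ j ∈ Finset.range i, K j) fun x => _root_.leadingWeight (θ · x) i :=
  ((hθ i).sub (LipschitzWith.finset_sum _ fun j _ => hθ j)).const_max 0

section Selection

variable {B : Type*} [PseudoMetricSpace B]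

noncomputable def coverSelection (E : ℕ → Set B) (c : ℕ → ℝ) (k : ℕ) (x : B) : ℝ :=
  ∑ i ∈ Finset.range (k + 1), c i * leadingWeight (fun j => closedBump (E j) k x) i

theorem exists_lipschitzWith_coverSelection (E : ℕ → Set B) (c : ℕ → ℝ) (k : ℕ) :
    ∃ K, LipschitzWith K (coverSelection E c k) :=
  ⟨_, LipschitzWith.finset_sum _ fun i _ => (lipschitzWith_smul (c i)).comp
    (LipschitzWith.leadingWeight (fun j => lipschitzWith_closedBump (E j) k) i)⟩

theorem coverSelection_eventually_eq {E : ℕ → Set B} (hE : ∀ i, IsClosed (E i)) (c : ℕ → ℝ)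
    {x : B} (hx : ∃ i, x ∈ E i) :
    ∃ i, x ∈ E i ∧ ∀ᶠ k in atTop, coverSelection E c k x = c i := by
  classical
  refine ⟨Nat.find hx, Nat.find_spec hx, ?_⟩
  have hbefore : ∀ j ∈ Finset.range (Nat.find hx), ∀ᶠ k in atTop, closedBump (E j) k x = 0 :=
    fun j hj => closedBump_eventually_eq_zero (hE j) (Nat.find_min hx (Finset.mem_range.1 hj))
  filter_upwards [eventually_ge_atTop (Nat.find hx), (Finset.eventually_all _).2 hbefore]
    with k hk hzero
  have hw := leadingWeight_eq_ite (fun _ => closedBump_nonneg) (fun _ => closedBump_le_one)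
    (closedBump_eq_one_of_mem (Nat.find_spec hx)) fun j hj => hzero j (Finset.mem_range.2 hj)
  simp only [coverSelection, hw, mul_ite, mul_one, mul_zero, Finset.sum_ite_eq',
    Finset.mem_range, Nat.lt_succ_of_le hk, if_true]

end Selection

section ClosedCover

variable {B : Type*} [PseudoMetricSpace B] {f : B → ℝ} {g : ℕ → B → ℝ}

theorem exists_closed_cover_dist_le_of_tendsto (hg : ∀ n, Continuous (g n))
    (hlim : ∀ x, Tendsto (g · x) atTop (𝓝 (f x))) {δ : ℝ} (hδ : 0 < δ) :
    ∃ (E : ℕ → Set B) (c : ℕ → ℝ), (∀ i, IsClosed (E i)) ∧ (∀ x, ∃ i, x ∈ E i) ∧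
      ∀ i, ∀ x ∈ E i, dist (f x) (c i) ≤ δ := by
  let p : ℕ → ℕ × ℚ := Denumerable.ofNat (ℕ × ℚ)
  refine ⟨fun i => ⋂ a ≥ (p i).1, g a ⁻¹' closedBall ((p i).2 : ℝ) δ, fun i => (p i).2,
    fun i => isClosed_biInter fun a _ => isClosed_closedBall.preimage (hg a), fun x => ?_,
    fun i x hx => isClosed_closedBall.mem_of_tendsto (hlim x)
      (eventually_atTop.2 ⟨_, fun a ha => mem_iInter₂.1 hx a ha⟩)⟩
  obtain ⟨q, hq₁, hq₂⟩ := exists_rat_btwn (sub_lt_self (f x) (half_pos hδ))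
  obtain ⟨N, hN⟩ := eventually_atTop.1 ((hlim x).eventually (ball_mem_nhds _ (half_pos hδ)))
  obtain ⟨i, hi⟩ := (Denumerable.eqv (ℕ × ℚ)).symm.surjective (N, q)
  have hpi : p i = (N, q) := hi
  refine ⟨i, mem_iInter₂.2 fun a ha => ?_⟩
  rw [hpi] at ha ⊢
  have hxa : dist (g a x) (f x) < δ / 2 := hN a ha
  have hxq : dist (f x) q < δ / 2 := by
    rw [Real.dist_eq, abs_lt]; constructor <;> linarith
  exact (dist_triangle _ _ _).trans (by linarith)

theorem exists_lipschitzWith_eventually_dist_le (hg : ∀ n, Continuous (g n))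
    (hlim : ∀ x, Tendsto (g · x) atTop (𝓝 (f x))) {δ : ℝ} (hδ : 0 < δ) :
    ∃ (F : ℕ → B → ℝ) (K : ℕ → ℝ≥0), (∀ k, LipschitzWith (K k) (F k)) ∧
      ∀ x, ∀ᶠ k in atTop, dist (F k x) (f x) ≤ δ := by
  obtain ⟨E, c, hE, hcover, hc⟩ := exists_closed_cover_dist_le_of_tendsto hg hlim hδ
  choose K hK using exists_lipschitzWith_coverSelection E c
  refine ⟨coverSelection E c, K, hK, fun x => ?_⟩
  obtain ⟨i, hxi, hsel⟩ := coverSelection_eventually_eq hE c (hcover x)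
  filter_upwards [hsel] with k hk
  rw [hk, dist_comm]
  exact hc i x hxi

end ClosedCover

/-- Clipping the increments to `±2¹⁻ᵐ` changes nothing where `u m` is `2⁻ᵐ`-close to a common
limit, and bounds the tail of the sum uniformly. -/
noncomputable def clampedIncrement (u : ℕ → ℝ) (m : ℕ) : ℝ :=
  max (-(2 * (1 / 2) ^ m)) (min (2 * (1 / 2) ^ m) (u (m + 1) - u m))

noncomputable def clampedTelescope (u : ℕ → ℝ) (k : ℕ) : ℝ :=
  u 0 + ∑ m ∈ Finset.range k, clampedIncrement u m

theorem abs_clampedIncrement_le (u : ℕ → ℝ) (m : ℕ) :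
    |clampedIncrement u m| ≤ 2 * (1 / 2) ^ m := by
  have : (0 : ℝ) ≤ 2 * (1 / 2) ^ m := by positivity
  rw [clampedIncrement, abs_le]
  exact ⟨le_max_left _ _, max_le (by linarith) (min_le_left _ _)⟩

theorem clampedIncrement_eq_of_abs_le {u : ℕ → ℝ} {m : ℕ}
    (h : |u (m + 1) - u m| ≤ 2 * (1 / 2) ^ m) : clampedIncrement u m = u (m + 1) - u m := by
  rw [abs_le] at h
  rw [clampedIncrement, min_eq_right h.2, max_eq_right h.1]

theorem sum_Ico_abs_clampedIncrement_le (u : ℕ → ℝ) (M k : ℕ) :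
    |∑ m ∈ Finset.Ico M k, clampedIncrement u m| ≤ 4 * (1 / 2) ^ M :=
  calc |∑ m ∈ Finset.Ico M k, clampedIncrement u m|
      ≤ ∑ m ∈ Finset.Ico M k, 2 * (1 / 2 : ℝ) ^ m :=
        (Finset.abs_sum_le_sum_abs _ _).trans
          (Finset.sum_le_sum fun m _ => abs_clampedIncrement_le u m)
    _ = 2 * ∑ m ∈ Finset.Ico M k, (1 / 2 : ℝ) ^ m := (Finset.mul_sum _ _ _).symm
    _ ≤ 2 * ((1 / 2) ^ M / (1 - 1 / 2)) := by
        gcongr; exact geom_sum_Ico_le_of_lt_one (by norm_num) (by norm_num)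
    _ = 4 * (1 / 2) ^ M := by ring

theorem dist_clampedTelescope_le {u : ℕ → ℝ} {y : ℝ} {M k : ℕ} (hMk : M ≤ k)
    (hu : ∀ m ≤ M, dist (u m) y ≤ (1 / 2) ^ m) :
    dist (clampedTelescope u k) y ≤ 5 * (1 / 2) ^ M := by
  have hhead : ∑ m ∈ Finset.range M, clampedIncrement u m = u M - u 0 := by
    rw [← Finset.sum_range_sub]
    refine Finset.sum_congr rfl fun m hm => clampedIncrement_eq_of_abs_le ?_
    have hm : m < M := Finset.mem_range.1 hm
    calc |u (m + 1) - u m| ≤ dist (u (m + 1)) y + dist (u m) y := by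
          rw [← Real.dist_eq]; exact dist_triangle_right _ _ _
      _ ≤ (1 / 2) ^ (m + 1) + (1 / 2) ^ m := add_le_add (hu _ hm) (hu _ hm.le)
      _ ≤ 2 * (1 / 2) ^ m := by
          rw [pow_succ]; linarith [pow_nonneg (by norm_num : (0 : ℝ) ≤ 1 / 2) m]
  calc dist (clampedTelescope u k) y
      = |(u M - y) + ∑ m ∈ Finset.Ico M k, clampedIncrement u m| := by
        rw [clampedTelescope, ← Finset.sum_range_add_sum_Ico _ hMk, hhead, Real.dist_eq]
        ring_nf
    _ ≤ |u M - y| + |∑ m ∈ Finset.Ico M k, clampedIncrement u m| := abs_add_le _ _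
    _ ≤ (1 / 2) ^ M + 4 * (1 / 2) ^ M :=
        add_le_add (hu M le_rfl) (sum_Ico_abs_clampedIncrement_le u M k)
    _ = 5 * (1 / 2) ^ M := by ring

section LipschitzApproximation

variable {B : Type*} [PseudoMetricSpace B] {f : B → ℝ}

theorem exists_lipschitzWith_tendsto_of_eventually_dist_le {F : ℕ → ℕ → B → ℝ}
    {K : ℕ → ℕ → ℝ≥0} (hF : ∀ m k, LipschitzWith (K m k) (F m k))
    (hfF : ∀ m x, ∀ᶠ k in atTop, dist (F m k x) (f x) ≤ (1 / 2) ^ m) :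
    ∃ (G : ℕ → B → ℝ) (L : ℕ → ℝ≥0), (∀ k, LipschitzWith (L k) (G k)) ∧
      ∀ x, Tendsto (G · x) atTop (𝓝 (f x)) := by
  refine ⟨fun k x => clampedTelescope (F · k x) k, _,
    fun k => (hF 0 k).add (LipschitzWith.finset_sum _ fun m _ =>
      (((hF (m + 1) k).sub (hF m k)).const_min _).const_max _), fun x => ?_⟩
  refine Metric.tendsto_nhds.2 fun η hη => ?_
  obtain ⟨M, hM⟩ :=
    exists_pow_lt_of_lt_one (div_pos hη (by norm_num : (0 : ℝ) < 5)) (by norm_num : (1 / 2 : ℝ) < 1)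
  filter_upwards [eventually_ge_atTop M, (Finset.range (M + 1)).eventually_all.2 fun m _ => hfF m x]
    with k hMk hk
  exact (dist_clampedTelescope_le hMk fun m hm =>
    hk m (Finset.mem_range.2 (Nat.lt_succ_of_le hm))).trans_lt (by linarith)

theorem exists_lipschitzWith_tendsto_of_continuous_tendsto {g : ℕ → B → ℝ}
    (hg : ∀ n, Continuous (g n)) (hlim : ∀ x, Tendsto (g · x) atTop (𝓝 (f x))) :
    ∃ (G : ℕ → B → ℝ) (L : ℕ → ℝ≥0), (∀ k, LipschitzWith (L k) (G k)) ∧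
      ∀ x, Tendsto (G · x) atTop (𝓝 (f x)) := by
  choose F K hF hfF using fun m : ℕ =>
    exists_lipschitzWith_eventually_dist_le hg hlim (pow_pos (by norm_num : (0 : ℝ) < 1 / 2) m)
  exact exists_lipschitzWith_tendsto_of_eventually_dist_le hF hfF

end LipschitzApproximation

theorem exists_tendsto_atTop_tendsto_apply_zero (a : ℕ → ℕ → ℝ)
    (ha : ∀ k, Tendsto (a k) atTop (𝓝 0)) :
    ∃ κ : ℕ → ℕ, Tendsto κ atTop atTop ∧ Tendsto (fun n => a (κ n) n) atTop (𝓝 0) := by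
  classical
  let κ n := Nat.findGreatest (fun k => |a k n| ≤ 1 / (k + 1)) n
  have hκ : ∀ M, ∀ᶠ n in atTop, M ≤ κ n ∧ |a (κ n) n| ≤ 1 / (κ n + 1) := fun M => by
    have hsmall : ∀ᶠ n in atTop, |a M n| ≤ 1 / (M + 1) :=
      (ha M).abs.eventually (ge_mem_nhds (by simpa using Nat.cast_add_one_pos M))
    filter_upwards [eventually_ge_atTop M, hsmall] with n hn hMn
    exact ⟨Nat.le_findGreatest hn hMn,
      Nat.findGreatest_spec (P := fun k => |a k n| ≤ 1 / (k + 1)) hn hMn⟩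
  have hκtop : Tendsto κ atTop atTop := tendsto_atTop.2 fun M => (hκ M).mono fun _ h => h.1
  exact ⟨κ, hκtop, squeeze_zero_norm' ((hκ 0).mono fun _ h => h.2)
    (tendsto_one_div_add_atTop_nhds_zero_nat.comp hκtop)⟩

theorem exists_reindex_tendsto_uniformly_on_shrinking_balls {B : Type*} [PseudoMetricSpace B]
    {f : B → ℝ} {F : ℕ → B → ℝ} {K : ℕ → ℝ≥0} (hF : ∀ k, LipschitzWith (K k) (F k))
    (hlim : ∀ b, Tendsto (F · b) atTop (𝓝 (f b))) {r : ℕ → ℝ} (hr : Tendsto r atTop (𝓝 0)) :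
    ∃ κ : ℕ → ℕ, ∀ b, ∀ η > 0, ∀ᶠ n in atTop,
      ∀ b', dist b b' ≤ r n → dist (F (κ n) b') (f b) < η := by
  obtain ⟨κ, hκ, hKr⟩ := exists_tendsto_atTop_tendsto_apply_zero (fun k n => K k * r n)
    fun k => by simpa using hr.const_mul (K k : ℝ)
  refine ⟨κ, fun b η hη => ?_⟩
  filter_upwards [hKr.eventually (gt_mem_nhds (half_pos hη)),
    ((hlim b).comp hκ).eventually (ball_mem_nhds _ (half_pos hη))] with n hKn hFn b' hb'
  calc dist (F (κ n) b') (f b) ≤ dist (F (κ n) b') (F (κ n) b) + dist (F (κ n) b) (f b) :=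
        dist_triangle _ _ _
    _ ≤ K (κ n) * r n + dist (F (κ n) b) (f b) := by
        gcongr
        exact ((hF _).dist_le_mul b' b).trans (by rw [dist_comm]; gcongr)
    _ < η / 2 + η / 2 := add_lt_add hKn hFn
    _ = η := add_halves η

theorem tendsto_comp_one_div_natCast {φ : ℝ → ℝ} (hφ : ContinuousWithinAt φ (Ici 0) 0)
    (hφ₀ : φ 0 = 0) : Tendsto (fun n : ℕ => φ (1 / n)) atTop (𝓝 0) := by
  rw [← hφ₀]
  exact hφ.tendsto.comp (tendsto_nhdsWithin_iff.2
    ⟨tendsto_one_div_atTop_nhds_zero_nat, .of_forall fun n => mem_Ici.2 (by positivity)⟩)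

/-- `f : B → ℝ` is a pointwise limit of continuous functions iff for every gauge `φ`
there is a sequence of continuous functions `f n` φ-converging to `f` uniformly over the
balls `dist b b' ≤ φ (1/n)`. -/
theorem pointwise_limit_iff_phi_convergence_for_all_gauges
    {B : Type*} [MetricSpace B] (f : B → ℝ) :
    (∃ g : ℕ → B → ℝ, (∀ n, Continuous (g n)) ∧
      ∀ b : B, Tendsto (fun n => g n b) atTop (nhds (f b))) ↔
    (∀ (φ : ℝ → ℝ) (ε : ℝ), 0 < ε → ContinuousOn φ (Set.Ico 0 ε) → φ 0 = 0 →
      (∀ x ∈ Set.Ico 0 ε, 0 ≤ φ x) →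
      ∃ fseq : ℕ → B → ℝ, (∀ n, Continuous (fseq n)) ∧
        ∀ b : B, ∀ η : ℝ, 0 < η → ∃ N : ℕ, ∀ n : ℕ, N ≤ n →
          ∀ b' : B, dist b b' ≤ φ (1 / n) → |fseq n b' - f b| < η) := by
  constructor
  · rintro ⟨g, hg, hlim⟩ φ ε hε hφ hφ₀ -
    obtain ⟨F, K, hF, hFlim⟩ := exists_lipschitzWith_tendsto_of_continuous_tendsto hg hlim
    have hr := tendsto_comp_one_div_natCast
      ((hφ 0 ⟨le_rfl, hε⟩).mono_of_mem_nhdsWithin (Ico_mem_nhdsGE hε)) hφ₀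
    obtain ⟨κ, hκ⟩ := exists_reindex_tendsto_uniformly_on_shrinking_balls hF hFlim hr
    exact ⟨fun n => F (κ n), fun n => (hF (κ n)).continuous,
      fun b η hη => eventually_atTop.1 (hκ b η hη)⟩
  · intro h
    obtain ⟨g, hg, hlim⟩ := h (fun _ => 0) 1 one_pos continuousOn_const rfl fun _ _ => le_rfl
    refine ⟨g, hg, fun b => Metric.tendsto_atTop.2 fun η hη => ?_⟩
    obtain ⟨N, hN⟩ := hlim b η hη
    exact ⟨N, fun n hn => hN n hn b (dist_self b).le⟩
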